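/- arXiv:2110.10676 — 2 statements merged into one kernel-verified Lean document; each statement's English description precedes it below -/
import Mathlib

section
/- Let X be a finite poset, F a field with more than 2 elements (of arbitrary characteristic), and B an associative F-algebra. Then every F-linear map φ: I(X,F) → B that preserves idempotents satisfies φ(fg + gf) = φ(f)φ(g) + φ(g)φ(f) for all f, g ∈ I(X,F). -/
/-!
Put `D(f, g) = φ f φ g + φ g φ f - φ (f g + g f)` and `Q f = (φ f)² - φ (f²)` (`φ.jordanDefect`
and `φ.sqDefect`). Then `D` is bilinear, `Q (f + g) = Q f + Q g + D(f, g)` and `Q` vanishes on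
idempotents, so `D(p, q) = 0` as soon as `Q` vanishes at `p`, `q` and `p + q`. If `e + t u` is
idempotent for every scalar `t`, then `t D(e, u) + t² Q u = 0` for all `t`, which forces
`D(e, u) = Q u = 0` because `F` has an element other than `0` and `1`. In `I(X, F)` the lines
`e_xx + t e_xy` and `e_yy + t e_xy` (`x < y`) consist of idempotents, and suitable sums of matrix
units are idempotent; together they make `D` vanish on every pair of matrix units, hence
everywhere by bilinearity.
-/

open IncidenceAlgebra

/-- A poset is connected if any two elements can be joined by a sequence of elements
in which consecutive elements are comparable. -/
def PosetConnected (X : Type*) [PartialOrder X] : Prop :=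
  ∀ x y : X, Relation.ReflTransGen (fun a b : X => a ≤ b ∨ b ≤ a) x y

open Cardinal Finset

theorem exists_ne_zero_ne_one_of_two_lt_mk {R : Type*} [Zero R] [One R] (hR : 2 < #R) :
    ∃ c : R, c ≠ 0 ∧ c ≠ 1 := by
  by_contra! h
  have hsub : (Set.univ : Set R) ⊆ {0, 1} := fun c _ => (eq_or_ne c 0).imp id (h c)
  refine hR.not_ge ?_
  calc #R = #(Set.univ : Set R) := mk_univ.symm
    _ ≤ #({0, 1} : Set R) := mk_le_mk_of_subset hsub
    _ ≤ #({1} : Set R) + 1 := mk_insert_le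
    _ = 2 := by rw [mk_singleton]; norm_num

theorem eq_zero_and_eq_zero_of_forall_smul_add_sq_smul_eq_zero {F M : Type*} [Field F]
    [AddCommGroup M] [Module F M] (hF : 2 < #F) {a b : M}
    (h : ∀ t : F, t • a + t ^ 2 • b = 0) : a = 0 ∧ b = 0 := by
  obtain ⟨c, hc0, hc1⟩ := exists_ne_zero_ne_one_of_two_lt_mk hF
  have ha : a = -b := by simpa [eq_neg_iff_add_eq_zero] using h 1
  have hb : (c * (c - 1)) • b = 0 := by
    rw [← h c, ha, smul_neg, mul_sub, mul_one, sub_smul, sq]; abel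
  have hb0 : b = 0 := (smul_eq_zero.1 hb).resolve_left (mul_ne_zero hc0 (sub_ne_zero.2 hc1))
  exact ⟨by rw [ha, hb0, neg_zero], hb0⟩

theorem IsIdempotentElem.add_smul_of_mul_self_eq_zero {R A : Type*} [CommSemiring R]
    [NonUnitalSemiring A] [Module R A] [SMulCommClass R A A] [IsScalarTower R A A] {e u : A}
    (he : IsIdempotentElem e) (hu : e * u + u * e = u) (huu : u * u = 0) (t : R) :
    IsIdempotentElem (e + t • u) := by
  unfold IsIdempotentElem at *
  simp only [mul_add, add_mul, smul_mul_assoc, mul_smul_comm, huu, smul_zero, he]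
  rw [add_zero, add_assoc, ← smul_add, add_comm (u * e), hu]

namespace LinearMap

section

variable {R A B : Type*} [CommRing R] [NonUnitalRing A] [Module R A] [NonUnitalRing B]
  [Module R B] (φ : A →ₗ[R] B)

def PreservesIdempotents : Prop := ∀ e, IsIdempotentElem e → IsIdempotentElem (φ e)

def sqDefect (f : A) : B := φ f * φ f - φ (f * f)

theorem sqDefect_zero : φ.sqDefect 0 = 0 := by simp [sqDefect]

variable {φ}

theorem PreservesIdempotents.sqDefect_eq_zero (hφ : PreservesIdempotents φ) {e : A}
    (he : IsIdempotentElem e) : φ.sqDefect e = 0 := by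
  rw [sqDefect, he.eq, hφ e he, sub_self]

end

section

variable {R A B : Type*} [CommRing R]
  [NonUnitalRing A] [Module R A] [SMulCommClass R A A] [IsScalarTower R A A]
  [NonUnitalRing B] [Module R B] [SMulCommClass R B B] [IsScalarTower R B B]
  (φ : A →ₗ[R] B)

def jordanDefect : A →ₗ[R] A →ₗ[R] B :=
  (mul R B).compl₁₂ φ φ + ((mul R B).compl₁₂ φ φ).flip - (mul R A + (mul R A).flip).compr₂ φ

theorem jordanDefect_apply (f g : A) :
    φ.jordanDefect f g = φ f * φ g + φ g * φ f - φ (f * g + g * f) := by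
  simp [jordanDefect]

theorem jordanDefect_comm (f g : A) : φ.jordanDefect f g = φ.jordanDefect g f := by
  simp only [jordanDefect_apply, add_comm]

theorem sqDefect_add (f g : A) :
    φ.sqDefect (f + g) = φ.sqDefect f + φ.sqDefect g + φ.jordanDefect f g := by
  simp only [sqDefect, jordanDefect_apply, map_add, mul_add, add_mul]; abel

theorem sqDefect_smul (c : R) (f : A) : φ.sqDefect (c • f) = c ^ 2 • φ.sqDefect f := by
  simp only [sqDefect, map_smul, smul_mul_assoc, mul_smul_comm, smul_smul, smul_sub, sq]

theorem jordanDefect_self (f : A) : φ.jordanDefect f f = 2 • φ.sqDefect f := by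
  rw [jordanDefect_apply, sqDefect, two_nsmul, map_add]; abel

variable {φ}

theorem jordanDefect_eq_zero_of_sqDefect_eq_zero {f g : A} (hf : φ.sqDefect f = 0)
    (hg : φ.sqDefect g = 0) (hfg : φ.sqDefect (f + g) = 0) : φ.jordanDefect f g = 0 := by
  rwa [sqDefect_add, hf, hg, zero_add, zero_add] at hfg

theorem PreservesIdempotents.jordanDefect_eq_zero (hφ : φ.PreservesIdempotents) {p q : A}
    (hp : IsIdempotentElem p) (hq : φ.sqDefect q = 0) (hpq : IsIdempotentElem (p + q)) :
    φ.jordanDefect p q = 0 :=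
  jordanDefect_eq_zero_of_sqDefect_eq_zero (hφ.sqDefect_eq_zero hp) hq (hφ.sqDefect_eq_zero hpq)

end

theorem PreservesIdempotents.sqDefect_eq_zero_and_jordanDefect_eq_zero {F A B : Type*} [Field F]
    [NonUnitalRing A] [Module F A] [SMulCommClass F A A] [IsScalarTower F A A]
    [NonUnitalRing B] [Module F B] [SMulCommClass F B B] [IsScalarTower F B B]
    {φ : A →ₗ[F] B} (hφ : PreservesIdempotents φ) (hF : 2 < #F) {e u : A}
    (h : ∀ t : F, IsIdempotentElem (e + t • u)) :
    φ.sqDefect u = 0 ∧ φ.jordanDefect e u = 0 := by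
  have he : IsIdempotentElem e := by simpa using h 0
  refine (eq_zero_and_eq_zero_of_forall_smul_add_sq_smul_eq_zero hF fun t => ?_).symm
  have := hφ.sqDefect_eq_zero (h t)
  rwa [sqDefect_add, hφ.sqDefect_eq_zero he, sqDefect_smul, map_smul, zero_add, add_comm] at this

end LinearMap

namespace IncidenceAlgebra

open scoped Classical

section

variable {𝕜 X : Type*} [PartialOrder X]

/-- The matrix unit `e_xy`, which is `0` unless `x ≤ y`. -/
noncomputable def single [Zero 𝕜] [One 𝕜] (x y : X) : IncidenceAlgebra 𝕜 X :=
  ⟨fun a b => if a = x ∧ b = y ∧ x ≤ y then 1 else 0, by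
    rintro a b hab
    rw [ite_eq_right_iff]
    rintro ⟨rfl, rfl, h⟩
    exact absurd h hab⟩

theorem single_apply [Zero 𝕜] [One 𝕜] (x y a b : X) :
    single (𝕜 := 𝕜) x y a b = if a = x ∧ b = y ∧ x ≤ y then 1 else 0 := rfl

theorem single_of_not_le [Zero 𝕜] [One 𝕜] {x y : X} (h : ¬x ≤ y) : single (𝕜 := 𝕜) x y = 0 := by
  ext a b _
  simp [single_apply, h]

theorem sum_apply [AddCommMonoid 𝕜] {ι : Type*} (s : Finset ι) (f : ι → IncidenceAlgebra 𝕜 X)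
    (a b : X) : (∑ i ∈ s, f i) a b = ∑ i ∈ s, f i a b :=
  map_sum (⟨⟨fun g : IncidenceAlgebra 𝕜 X => g a b, rfl⟩, fun _ _ => rfl⟩ :
    IncidenceAlgebra 𝕜 X →+ 𝕜) f s

theorem sum_smul_single [Semiring 𝕜] [Fintype X] (f : IncidenceAlgebra 𝕜 X) :
    ∑ p : X × X, f p.1 p.2 • single p.1 p.2 = f := by
  ext a b hab
  rw [sum_apply, sum_eq_single (a, b)]
  · simp [single_apply, hab]
  · rintro ⟨x, y⟩ _ hxy
    simp only [constSMul_apply, single_apply, smul_eq_mul, mul_ite, mul_one, mul_zero,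
      ite_eq_right_iff, and_imp]
    rintro rfl rfl _
    exact absurd rfl hxy
  · simp

variable [LocallyFiniteOrder X]

theorem single_mul_single [Semiring 𝕜] {x y z w : X} (hxy : x ≤ y) (hzw : z ≤ w) :
    single (𝕜 := 𝕜) x y * single z w = if y = z then single x w else 0 := by
  ext a b hab
  split_ifs with hyz
  · subst hyz
    by_cases hax : a = x
    · by_cases hbw : b = w
      · subst hax hbw
        simp [single_apply, hxy, hzw, hxy.trans hzw]
      · simp [single_apply, hbw]
    · simp [single_apply, hax]
  · refine sum_eq_zero fun t _ => ?_
    simp only [single_apply]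
    split_ifs with h1 h2 <;> simp_all

theorem isIdempotentElem_single_self [Semiring 𝕜] (x : X) :
    IsIdempotentElem (single (𝕜 := 𝕜) x x) := by
  simp [IsIdempotentElem, single_mul_single]

variable [CommSemiring 𝕜] {x y : X}

theorem isIdempotentElem_single_self_add_smul_single (h : x < y) (t : 𝕜) :
    IsIdempotentElem (single x x + t • single (𝕜 := 𝕜) x y) :=
  (isIdempotentElem_single_self x).add_smul_of_mul_self_eq_zero
    (by simp [single_mul_single, h.le, h.ne']) (by simp [single_mul_single, h.le, h.ne']) t

theorem isIdempotentElem_single_self_add_smul_single' (h : x < y) (t : 𝕜) :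
    IsIdempotentElem (single y y + t • single (𝕜 := 𝕜) x y) :=
  (isIdempotentElem_single_self y).add_smul_of_mul_self_eq_zero
    (by simp [single_mul_single, h.le, h.ne']) (by simp [single_mul_single, h.le, h.ne']) t

theorem isIdempotentElem_single_self_add_single (h : x < y) :
    IsIdempotentElem (single x x + single (𝕜 := 𝕜) x y) := by
  simpa using isIdempotentElem_single_self_add_smul_single h (1 : 𝕜)

theorem isIdempotentElem_single_self_add_single' (h : x < y) :
    IsIdempotentElem (single y y + single (𝕜 := 𝕜) x y) := by
  simpa using isIdempotentElem_single_self_add_smul_single' h (1 : 𝕜)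

end

section

open LinearMap (PreservesIdempotents jordanDefect_self jordanDefect_comm sqDefect_add sqDefect_zero)

variable {F X B : Type*} [Field F] [PartialOrder X] [LocallyFiniteOrder X]
  [NonUnitalRing B] [Module F B] [SMulCommClass F B B] [IsScalarTower F B B]
  {φ : IncidenceAlgebra F X →ₗ[F] B}

theorem jordanDefect_single_self_of_lt (hφ : PreservesIdempotents φ) (hF : 2 < #F) {x y : X}
    (h : x < y) :
    φ.jordanDefect (single x x) (single x y) = 0 ∧ φ.jordanDefect (single y y) (single x y) = 0 :=
  ⟨(hφ.sqDefect_eq_zero_and_jordanDefect_eq_zero hF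
      (isIdempotentElem_single_self_add_smul_single h)).2,
    (hφ.sqDefect_eq_zero_and_jordanDefect_eq_zero hF
      (isIdempotentElem_single_self_add_smul_single' h)).2⟩

theorem sqDefect_single (hφ : PreservesIdempotents φ) (hF : 2 < #F) (x y : X) :
    φ.sqDefect (single x y) = 0 := by
  by_cases hxy : x ≤ y
  · rcases hxy.lt_or_eq with h | rfl
    · exact (hφ.sqDefect_eq_zero_and_jordanDefect_eq_zero hF
        (isIdempotentElem_single_self_add_smul_single h)).1
    · exact hφ.sqDefect_eq_zero (isIdempotentElem_single_self x)
  · rw [single_of_not_le hxy, sqDefect_zero]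

theorem jordanDefect_single_self_single_self (hφ : PreservesIdempotents φ) (x z : X) :
    φ.jordanDefect (single x x) (single z z) = 0 := by
  rcases eq_or_ne x z with rfl | hxz
  · rw [jordanDefect_self, hφ.sqDefect_eq_zero (isIdempotentElem_single_self x), smul_zero]
  · refine hφ.jordanDefect_eq_zero (isIdempotentElem_single_self x)
      (hφ.sqDefect_eq_zero (isIdempotentElem_single_self z))
      ((isIdempotentElem_single_self x).add (isIdempotentElem_single_self z) ?_)
    simp [single_mul_single, hxz, hxz.symm]

theorem jordanDefect_single_self_single (hφ : PreservesIdempotents φ) (hF : 2 < #F) (z x y : X) :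
    φ.jordanDefect (single z z) (single x y) = 0 := by
  by_cases hxy : x ≤ y
  · rcases hxy.lt_or_eq with h | rfl
    · rcases eq_or_ne z x with rfl | hzx
      · exact (jordanDefect_single_self_of_lt hφ hF h).1
      rcases eq_or_ne z y with rfl | hzy
      · exact (jordanDefect_single_self_of_lt hφ hF h).2
      have hxx_xy := isIdempotentElem_single_self_add_single (𝕜 := F) h
      have := hφ.jordanDefect_eq_zero (isIdempotentElem_single_self z)
        (hφ.sqDefect_eq_zero hxx_xy) ((isIdempotentElem_single_self z).add hxx_xy
          (by simp [mul_add, add_mul, single_mul_single, h.le, hzx, hzx.symm, hzy.symm]))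
      rwa [map_add, jordanDefect_single_self_single_self hφ, zero_add] at this
    · exact jordanDefect_single_self_single_self hφ z x
  · rw [single_of_not_le hxy, map_zero]

theorem jordanDefect_single_single_same_left (hφ : PreservesIdempotents φ) (hF : 2 < #F)
    {x y w : X} (hxy : x < y) (hxw : x < w) :
    φ.jordanDefect (single x y) (single x w) = 0 := by
  have := hφ.jordanDefect_eq_zero (isIdempotentElem_single_self_add_single hxy)
    (sqDefect_single hφ hF x w) (by
      simp [IsIdempotentElem, mul_add, add_mul, single_mul_single, hxy.le, hxw.le, hxy.ne',
        hxw.ne'])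
  rwa [map_add, LinearMap.add_apply, jordanDefect_single_self_single hφ hF, zero_add] at this

theorem jordanDefect_single_single_same_right (hφ : PreservesIdempotents φ) (hF : 2 < #F)
    {x y z : X} (hxy : x < y) (hzy : z < y) :
    φ.jordanDefect (single x y) (single z y) = 0 := by
  have := hφ.jordanDefect_eq_zero (isIdempotentElem_single_self_add_single' hxy)
    (sqDefect_single hφ hF z y) (by
      simp [IsIdempotentElem, mul_add, add_mul, single_mul_single, hxy.le, hzy.le, hxy.ne',
        hzy.ne'])
  rwa [map_add, LinearMap.add_apply, jordanDefect_single_self_single hφ hF, zero_add] at this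

theorem jordanDefect_single_single_of_ne (hφ : PreservesIdempotents φ) (hF : 2 < #F)
    {x y z w : X} (hxy : x < y) (hzw : z < w) (hxz : x ≠ z) (hyz : y ≠ z) (hxw : x ≠ w) :
    φ.jordanDefect (single x y) (single z w) = 0 := by
  have := hφ.jordanDefect_eq_zero (isIdempotentElem_single_self_add_single hxy)
    (hφ.sqDefect_eq_zero (isIdempotentElem_single_self_add_single hzw))
    ((isIdempotentElem_single_self_add_single hxy).add
      (isIdempotentElem_single_self_add_single hzw)
      (by simp [mul_add, add_mul, single_mul_single, hxy.le, hzw.le, hxz, hxz.symm, hyz,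
        hxw.symm]))
  simpa only [map_add, LinearMap.add_apply, jordanDefect_single_self_single hφ hF,
    jordanDefect_comm φ (single x y) (single z z), zero_add] using this

theorem jordanDefect_single_single_of_lt_of_lt (hφ : PreservesIdempotents φ) (hF : 2 < #F)
    {x y w : X} (hxy : x < y) (hyw : y < w) :
    φ.jordanDefect (single x y) (single y w) = 0 := by
  have hxw := hxy.trans hyw
  have hq : φ.sqDefect (single y w + single x w) = 0 := by
    rw [sqDefect_add, sqDefect_single hφ hF, sqDefect_single hφ hF,
      jordanDefect_single_single_same_right hφ hF hyw hxw, add_zero, add_zero]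
  have := hφ.jordanDefect_eq_zero (isIdempotentElem_single_self_add_single' hxy) hq (by
    simp [IsIdempotentElem, mul_add, add_mul, single_mul_single, hxy.le, hyw.le, hxw.le,
      hxy.ne', hyw.ne', hxw.ne'])
  simpa only [map_add, LinearMap.add_apply, jordanDefect_single_self_single hφ hF,
    jordanDefect_single_single_same_left hφ hF hxy hxw, zero_add, add_zero] using this

theorem jordanDefect_single_single (hφ : PreservesIdempotents φ) (hF : 2 < #F) (x y z w : X) :
    φ.jordanDefect (single x y) (single z w) = 0 := by
  by_cases hxy : x ≤ y
  swap
  · rw [single_of_not_le hxy, map_zero, LinearMap.zero_apply]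
  by_cases hzw : z ≤ w
  swap
  · rw [single_of_not_le hzw, map_zero]
  rcases hxy.lt_or_eq with hxy | rfl
  swap
  · exact jordanDefect_single_self_single hφ hF x z w
  rcases hzw.lt_or_eq with hzw | rfl
  swap
  · rw [jordanDefect_comm]
    exact jordanDefect_single_self_single hφ hF z x y
  rcases eq_or_ne y z with rfl | hyz
  · exact jordanDefect_single_single_of_lt_of_lt hφ hF hxy hzw
  rcases eq_or_ne x w with rfl | hxw
  · rw [jordanDefect_comm]
    exact jordanDefect_single_single_of_lt_of_lt hφ hF hzw hxy
  rcases eq_or_ne x z with rfl | hxz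
  · exact jordanDefect_single_single_same_left hφ hF hxy hzw
  exact jordanDefect_single_single_of_ne hφ hF hxy hzw hxz hyz hxw

theorem jordanDefect_eq_zero [Fintype X] (hφ : PreservesIdempotents φ) (hF : 2 < #F)
    (f g : IncidenceAlgebra F X) : φ.jordanDefect f g = 0 := by
  rw [← sum_smul_single f, ← sum_smul_single g]
  simp [map_sum, map_smul, jordanDefect_single_single hφ hF]

end

end IncidenceAlgebra

theorem stmt_3_general {X : Type*} [PartialOrder X] [Fintype X] [LocallyFiniteOrder X]
    {F : Type*} [Field F] (hcard : 2 < Cardinal.mk F)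
    {B : Type*} [NonUnitalRing B] [Module F B] [SMulCommClass F B B] [IsScalarTower F B B]
    (φ : IncidenceAlgebra F X →ₗ[F] B)
    (hidem : ∀ f : IncidenceAlgebra F X, f * f = f → φ f * φ f = φ f) :
    ∀ f g : IncidenceAlgebra F X, φ (f * g + g * f) = φ f * φ g + φ g * φ f := by
  intro f g
  classical
  have := IncidenceAlgebra.jordanDefect_eq_zero hidem hcard f g
  rwa [LinearMap.jordanDefect_apply, sub_eq_zero, eq_comm] at this

/-- over a field with more than 2 elements, every linear idempotent preserver
from the incidence algebra of a finite poset into an associative algebra preserves the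
Jordan product. -/
theorem stmt_3 {X : Type*} [PartialOrder X] [Fintype X] [LocallyFiniteOrder X] [DecidableEq X]
    {F : Type*} [Field F] (hcard : 2 < Cardinal.mk F)
    {B : Type*} [NonUnitalRing B] [Module F B] [SMulCommClass F B B] [IsScalarTower F B B]
    (φ : IncidenceAlgebra F X →ₗ[F] B)
    (hidem : ∀ f : IncidenceAlgebra F X, f * f = f → φ f * φ f = φ f) :
    ∀ f g : IncidenceAlgebra F X, φ (f * g + g * f) = φ f * φ g + φ g * φ f :=
  stmt_3_general hcard φ hidem
end

section
/- Let X be a finite connected poset, F a field, and φ a Jordan automorphism of I(X,F) (a bijective F-linear map with φ(f²) = φ(f)² and φ(fgf) = φ(f)φ(g)φ(f) for all f, g) such that φ(e_x) = e_x for all x ∈ X. Then φ is a multiplicative automorphism of I(X,F): there exists σ: {(x,y) : x ≤ y} → F with σ(x,x) = 1, σ(x,y) ≠ 0 for all x ≤ y, and σ(x,y)σ(y,z) = σ(x,z) for all x ≤ y ≤ z, such that φ(f)(x,y) = σ(x,y) f(x,y) for all f ∈ I(X,F) and all x ≤ y. -/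
/-!
Since `φ` fixes every idempotent `e_x`, the Jordan triple identity (linearised when `x ≠ y`,
where `e_y f e_x = 0` for `x < y`) shows that `φ` commutes with the compressions
`f ↦ e_x f e_y`, `x ≤ y`. As `e_x f e_y = f(x,y) • e_x ζ e_y`, this yields
`φ(f)(x,y) = σ(x,y) f(x,y)` with `σ := φ ζ`. Applying the triple identity to `ζ e_y ζ` gives
`σ(x,y) σ(y,z) = σ(x,z)`, and `σ(x,y) ≠ 0` because `ζ` lies in the image of `φ`.
-/

open IncidenceAlgebra

/-- The standard basis element `e_{xy}` of the incidence algebra (for `x ≤ y`):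
the function taking value `1` at `(x, y)` and `0` elsewhere. -/
def eSingle {R : Type*} [Zero R] [One R] {X : Type*} [PartialOrder X] [DecidableEq X]
    (x y : X) (hxy : x ≤ y) : IncidenceAlgebra R X where
  toFun u v := if u = x ∧ v = y then 1 else 0
  eq_zero_of_not_le' u v huv := by
    show (if u = x ∧ v = y then (1 : R) else 0) = 0
    split_ifs with hc
    · obtain ⟨rfl, rfl⟩ := hc; exact absurd hxy huv
    · rfl

section Compression

variable {X : Type*} [PartialOrder X] [DecidableEq X] {F : Type*} [Semiring F]

lemma eSingle_apply (x y : X) (hxy : x ≤ y) (u v : X) :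
    (eSingle x y hxy : IncidenceAlgebra F X) u v = if u = x ∧ v = y then 1 else 0 := rfl

variable [LocallyFiniteOrder X]

lemma eSingle_self_mul_apply (x : X) (f : IncidenceAlgebra F X) (u v : X) :
    (eSingle x x le_rfl * f : IncidenceAlgebra F X) u v = if u = x then f x v else 0 := by
  by_cases hux : u = x
  · subst hux
    by_cases huv : u ≤ v
    · simp [eSingle_apply, huv]
    · simp [apply_eq_zero_of_not_le huv]
  · simp [eSingle_apply, hux]

lemma mul_eSingle_self_apply (f : IncidenceAlgebra F X) (y u v : X) :
    (f * eSingle y y le_rfl : IncidenceAlgebra F X) u v = if v = y then f u y else 0 := by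
  by_cases hvy : v = y
  · subst hvy
    by_cases huv : u ≤ v
    · simp [eSingle_apply, huv]
    · simp [apply_eq_zero_of_not_le huv]
  · simp [eSingle_apply, hvy]

lemma eSingle_mul_mul_eSingle_apply (x y : X) (f : IncidenceAlgebra F X) (u v : X) :
    (eSingle x x le_rfl * f * eSingle y y le_rfl : IncidenceAlgebra F X) u v
      = if u = x ∧ v = y then f x y else 0 := by
  rw [mul_eSingle_self_apply, eSingle_self_mul_apply]
  by_cases hu : u = x <;> by_cases hv : v = y <;> simp [hu, hv]

lemma eSingle_mul_mul_eSingle_of_not_le {x y : X} (h : ¬x ≤ y) (f : IncidenceAlgebra F X) :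
    (eSingle x x le_rfl * f * eSingle y y le_rfl : IncidenceAlgebra F X) = 0 :=
  ext fun u v _ => by
    rw [eSingle_mul_mul_eSingle_apply, apply_eq_zero_of_not_le h, ite_self, IncidenceAlgebra.zero_apply]

lemma eSingle_mul_mul_eSingle_eq_smul [DecidableLE X] (x y : X) (f : IncidenceAlgebra F X) :
    (eSingle x x le_rfl * f * eSingle y y le_rfl : IncidenceAlgebra F X)
      = f x y • (eSingle x x le_rfl * zeta F * eSingle y y le_rfl) := by
  by_cases hxy : x ≤ y
  · refine ext fun u v _ => ?_
    rw [constSMul_apply, eSingle_mul_mul_eSingle_apply, eSingle_mul_mul_eSingle_apply,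
      zeta_of_le hxy, smul_eq_mul, mul_ite, mul_one, mul_zero]
  · simp only [eSingle_mul_mul_eSingle_of_not_le hxy, smul_zero]

lemma mul_eSingle_mul_apply (f g : IncidenceAlgebra F X) (x y z : X) :
    (f * eSingle y y le_rfl * g : IncidenceAlgebra F X) x z = f x y * g y z := by
  rw [mul_apply]
  simp only [mul_eSingle_self_apply, ite_mul, zero_mul, Finset.sum_ite_eq']
  split_ifs with h
  · rfl
  · rw [Finset.mem_Icc, not_and_or] at h
    rcases h with hxy | hyz
    · rw [apply_eq_zero_of_not_le hxy, zero_mul]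
    · rw [apply_eq_zero_of_not_le hyz, mul_zero]

end Compression

theorem AddMonoidHom.map_mul_mul_add_mul_mul {R S : Type*} [NonUnitalNonAssocRing R]
    [NonUnitalNonAssocRing S] (φ : R →+ S) (h : ∀ f g, φ (f * g * f) = φ f * φ g * φ f)
    (f g k : R) : φ (f * g * k + k * g * f) = φ f * φ g * φ k + φ k * φ g * φ f := by
  have hfk := sub_eq_zero.mpr (h (f + k) g)
  simp only [add_mul, mul_add, map_add, h] at hfk
  rw [map_add, ← sub_eq_zero, ← hfk]
  abel

section JordanTriple

variable {X : Type*} [PartialOrder X] [LocallyFiniteOrder X] [DecidableEq X]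
  {F : Type*} [CommRing F] {φ : IncidenceAlgebra F X →ₗ[F] IncidenceAlgebra F X}

lemma map_eSingle_mul_mul_eSingle
    (htriple : ∀ f g : IncidenceAlgebra F X, φ (f * g * f) = φ f * φ g * φ f)
    (hfix : ∀ x : X, φ (eSingle x x le_rfl) = eSingle x x le_rfl)
    {x y : X} (hxy : x ≤ y) (f : IncidenceAlgebra F X) :
    φ (eSingle x x le_rfl * f * eSingle y y le_rfl)
      = eSingle x x le_rfl * φ f * eSingle y y le_rfl := by
  rcases eq_or_ne x y with rfl | hne
  · rw [htriple, hfix]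
  · have hyx : ¬y ≤ x := fun hyx => hne (le_antisymm hxy hyx)
    have h := φ.toAddMonoidHom.map_mul_mul_add_mul_mul htriple (eSingle x x le_rfl) f
      (eSingle y y le_rfl)
    simpa only [LinearMap.toAddMonoidHom_coe, hfix, eSingle_mul_mul_eSingle_of_not_le hyx,
      add_zero] using h

variable [DecidableLE X]

lemma map_apply_eq_map_zeta_apply_mul
    (htriple : ∀ f g : IncidenceAlgebra F X, φ (f * g * f) = φ f * φ g * φ f)
    (hfix : ∀ x : X, φ (eSingle x x le_rfl) = eSingle x x le_rfl)
    {x y : X} (hxy : x ≤ y) (f : IncidenceAlgebra F X) :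
    φ f x y = φ (zeta F) x y * f x y := by
  have hcompress : ∀ g : IncidenceAlgebra F X,
      φ g x y = g x y * φ (eSingle x x le_rfl * zeta F * eSingle y y le_rfl) x y := fun g =>
    calc φ g x y = (eSingle x x le_rfl * φ g * eSingle y y le_rfl : IncidenceAlgebra F X) x y := by
          rw [eSingle_mul_mul_eSingle_apply, if_pos ⟨rfl, rfl⟩]
      _ = φ (eSingle x x le_rfl * g * eSingle y y le_rfl) x y := by
          rw [map_eSingle_mul_mul_eSingle htriple hfix hxy]
      _ = _ := by
          rw [eSingle_mul_mul_eSingle_eq_smul x y g, map_smul, constSMul_apply, smul_eq_mul]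
  rw [hcompress f, hcompress (zeta F), zeta_of_le hxy, one_mul, mul_comm]

lemma map_zeta_apply_self
    (htriple : ∀ f g : IncidenceAlgebra F X, φ (f * g * f) = φ f * φ g * φ f)
    (hfix : ∀ x : X, φ (eSingle x x le_rfl) = eSingle x x le_rfl) (x : X) :
    φ (zeta F) x x = 1 := by
  simpa [hfix, eSingle_apply] using
    (map_apply_eq_map_zeta_apply_mul htriple hfix (le_refl x) (eSingle x x le_rfl)).symm

lemma map_zeta_apply_ne_zero [Nontrivial F]
    (htriple : ∀ f g : IncidenceAlgebra F X, φ (f * g * f) = φ f * φ g * φ f)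
    (hfix : ∀ x : X, φ (eSingle x x le_rfl) = eSingle x x le_rfl)
    (hsurj : Function.Surjective φ) {x y : X} (hxy : x ≤ y) :
    φ (zeta F) x y ≠ 0 := by
  obtain ⟨g, hg⟩ := hsurj (zeta F)
  have h := map_apply_eq_map_zeta_apply_mul htriple hfix hxy g
  rw [hg, zeta_of_le hxy] at h
  exact left_ne_zero_of_mul_eq_one h.symm

lemma map_zeta_apply_mul_map_zeta_apply
    (htriple : ∀ f g : IncidenceAlgebra F X, φ (f * g * f) = φ f * φ g * φ f)
    (hfix : ∀ x : X, φ (eSingle x x le_rfl) = eSingle x x le_rfl)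
    {x y z : X} (hxy : x ≤ y) (hyz : y ≤ z) :
    φ (zeta F) x y * φ (zeta F) y z = φ (zeta F) x z :=
  calc φ (zeta F) x y * φ (zeta F) y z
      = (φ (zeta F) * eSingle y y le_rfl * φ (zeta F) : IncidenceAlgebra F X) x z :=
        (mul_eSingle_mul_apply _ _ x y z).symm
    _ = φ (zeta F * eSingle y y le_rfl * zeta F) x z := by rw [htriple, hfix]
    _ = φ (zeta F) x z := by
        rw [map_apply_eq_map_zeta_apply_mul htriple hfix (hxy.trans hyz), mul_eSingle_mul_apply,
          zeta_of_le hxy, zeta_of_le hyz, mul_one, mul_one]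

end JordanTriple

theorem stmt_8_general {X : Type*} [PartialOrder X] [LocallyFiniteOrder X] [DecidableEq X]
    {F : Type*} [Field F]
    (φ : IncidenceAlgebra F X →ₗ[F] IncidenceAlgebra F X)
    (hbij : Function.Bijective φ)
    (htriple : ∀ f g : IncidenceAlgebra F X, φ (f * g * f) = φ f * φ g * φ f)
    (hfix : ∀ x : X, φ (eSingle x x le_rfl) = eSingle x x le_rfl) :
    ∃ σ : X → X → F,
      (∀ x : X, σ x x = 1) ∧
      (∀ x y : X, x ≤ y → σ x y ≠ 0) ∧
      (∀ x y z : X, x ≤ y → y ≤ z → σ x y * σ y z = σ x z) ∧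
      (∀ (f : IncidenceAlgebra F X) (x y : X), x ≤ y → φ f x y = σ x y * f x y) := by
  classical
  exact ⟨φ (zeta F), map_zeta_apply_self htriple hfix,
    fun _ _ => map_zeta_apply_ne_zero htriple hfix hbij.2,
    fun _ _ _ => map_zeta_apply_mul_map_zeta_apply htriple hfix,
    fun f _ _ hxy => map_apply_eq_map_zeta_apply_mul htriple hfix hxy f⟩

/-- a Jordan automorphism of the incidence algebra of a finite connected poset
fixing all `e_x` is a multiplicative automorphism. -/
theorem stmt_8 {X : Type*} [PartialOrder X] [Fintype X] [LocallyFiniteOrder X] [DecidableEq X]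
    {F : Type*} [Field F]
    (hconn : PosetConnected X)
    (φ : IncidenceAlgebra F X →ₗ[F] IncidenceAlgebra F X)
    (hbij : Function.Bijective φ)
    (hsq : ∀ f : IncidenceAlgebra F X, φ (f * f) = φ f * φ f)
    (htriple : ∀ f g : IncidenceAlgebra F X, φ (f * g * f) = φ f * φ g * φ f)
    (hfix : ∀ x : X, φ (eSingle x x le_rfl) = eSingle x x le_rfl) :
    ∃ σ : X → X → F,
      (∀ x : X, σ x x = 1) ∧
      (∀ x y : X, x ≤ y → σ x y ≠ 0) ∧
      (∀ x y z : X, x ≤ y → y ≤ z → σ x y * σ y z = σ x z) ∧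
      (∀ (f : IncidenceAlgebra F X) (x y : X), x ≤ y → φ f x y = σ x y * f x y) :=
  stmt_8_general φ hbij htriple hfix
end
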